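/- arXiv:0801.3629 — 7 statements merged into one kernel-verified Lean document; each statement's English description precedes it below -/
import Mathlib

section
/- Let f be analytic on the unit disk D. Then the function φ(r) = r^{-1} · sup_{|z|<r} |f(z) - f(0)| is strictly increasing for 0 < r < 1, unless f is linear (f(z) = az + b), in which case φ is constant. Moreover lim_{r→0} φ(r) = |f'(0)|. -/
/-!
Write `M(r)` for the radius of `f(rD)` about `f 0`. For `r < s`, Schwarz's lemma applied to
`f` on `ball 0 s`, which maps into `closedBall (f 0) (M s)`, bounds the difference quotient
`dslope f 0` by `M(s)/s` on `ball 0 s`. On the other hand `M(r)` is attained at some `z` with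
`‖z‖ ≤ r`, so `M(r)/r ≤ ‖dslope f 0 z‖ ≤ M(s)/s`. Equality forces `‖dslope f 0‖` to reach its
bound at an interior point, so `f` is affine on `ball 0 s` (equality case of Schwarz's lemma),
hence on `D` by the identity theorem. At `z = 0` the same bound reads `‖f'(0)‖ ≤ M(s)/s`, and
`dslope f 0 z → f'(0)` as `z → 0` squeezes `M(r)/r` to `‖f'(0)‖`.
-/

open Metric Set Filter Topology

/-- `Rad f(rD)`. -/
noncomputable def imageRadius (f : ℂ → ℂ) (r : ℝ) : ℝ :=
  sSup ((fun z => ‖f z - f 0‖) '' ball (0 : ℂ) r)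

section

variable {f : ℂ → ℂ} {r s : ℝ}

lemma bddAbove_image_ball (hf : DifferentiableOn ℂ f (ball (0 : ℂ) 1)) (hr : r < 1) :
    BddAbove ((fun z => ‖f z - f 0‖) '' ball (0 : ℂ) r) :=
  ((isCompact_closedBall (0 : ℂ) r).bddAbove_image
    ((hf.continuousOn.mono (closedBall_subset_ball hr)).sub continuousOn_const).norm).mono
    (image_mono ball_subset_closedBall)

lemma mapsTo_ball_closedBall_imageRadius (hf : DifferentiableOn ℂ f (ball (0 : ℂ) 1))
    (hs : s < 1) : MapsTo f (ball (0 : ℂ) s) (closedBall (f 0) (imageRadius f s)) :=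
  fun z hz => mem_closedBall_iff_norm.2 (le_csSup (bddAbove_image_ball hf hs) ⟨z, hz, rfl⟩)

lemma norm_dslope_le_imageRadius_div (hf : DifferentiableOn ℂ f (ball (0 : ℂ) 1)) (hs : s < 1)
    {z : ℂ} (hz : z ∈ ball (0 : ℂ) s) : ‖dslope f 0 z‖ ≤ s⁻¹ * imageRadius f s := by
  rw [← div_eq_inv_mul]
  exact Complex.norm_dslope_le_div_of_mapsTo_ball (hf.mono (ball_subset_ball hs.le))
    (mapsTo_ball_closedBall_imageRadius hf hs) hz

lemma norm_deriv_le_imageRadius_div (hf : DifferentiableOn ℂ f (ball (0 : ℂ) 1)) (hs₀ : 0 < s)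
    (hs : s < 1) : ‖deriv f 0‖ ≤ s⁻¹ * imageRadius f s := by
  simpa using norm_dslope_le_imageRadius_div hf hs (mem_ball_self hs₀)

lemma exists_imageRadius_le (hf : DifferentiableOn ℂ f (ball (0 : ℂ) 1)) (hr₀ : 0 < r)
    (hr : r < 1) : ∃ z ∈ closedBall (0 : ℂ) r, imageRadius f r ≤ ‖f z - f 0‖ := by
  obtain ⟨z, hz, hmax⟩ := (isCompact_closedBall (0 : ℂ) r).exists_isMaxOn
    (nonempty_closedBall.2 hr₀.le)
    ((hf.continuousOn.mono (closedBall_subset_ball hr)).sub continuousOn_const).norm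
  refine ⟨z, hz, csSup_le ((nonempty_ball.2 hr₀).image _) ?_⟩
  rintro _ ⟨w, hw, rfl⟩
  exact hmax (ball_subset_closedBall hw)

lemma exists_imageRadius_div_le_norm_dslope (hf : DifferentiableOn ℂ f (ball (0 : ℂ) 1))
    (hr₀ : 0 < r) (hr : r < 1) :
    ∃ z ∈ closedBall (0 : ℂ) r, r⁻¹ * imageRadius f r ≤ ‖dslope f 0 z‖ := by
  obtain ⟨z, hz, hle⟩ := exists_imageRadius_le hf hr₀ hr
  refine ⟨z, hz, (inv_mul_le_iff₀ hr₀).2 (hle.trans ?_)⟩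
  have hslope : f z - f 0 = z * dslope f 0 z := by
    simpa using (sub_smul_dslope f 0 z).symm
  rw [hslope, norm_mul]
  exact mul_le_mul_of_nonneg_right (mem_closedBall_zero_iff.1 hz) (norm_nonneg _)

lemma eqOn_ball_one_of_eqOn_ball (hf : DifferentiableOn ℂ f (ball (0 : ℂ) 1)) (hs₀ : 0 < s)
    {a b : ℂ} (h : ∀ z ∈ ball (0 : ℂ) s, f z = a * z + b) :
    ∀ z ∈ ball (0 : ℂ) 1, f z = a * z + b :=
  (hf.analyticOnNhd isOpen_ball).eqOn_of_preconnected_of_eventuallyEq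
    ((analyticOnNhd_const.mul analyticOnNhd_id).add analyticOnNhd_const)
    (convex_ball _ _).isPreconnected (mem_ball_self one_pos)
    (eventually_of_mem (ball_mem_nhds _ hs₀) h)

lemma strictMonoOn_imageRadius_div (hf : DifferentiableOn ℂ f (ball (0 : ℂ) 1))
    (hnl : ¬ ∃ a b : ℂ, ∀ z ∈ ball (0 : ℂ) 1, f z = a * z + b) :
    StrictMonoOn (fun r => r⁻¹ * imageRadius f r) (Ioo 0 1) := by
  intro r hr s hs hrs
  obtain ⟨z, hz, hle⟩ := exists_imageRadius_div_le_norm_dslope hf hr.1 hr.2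
  have hzs : z ∈ ball (0 : ℂ) s :=
    mem_ball_zero_iff.2 ((mem_closedBall_zero_iff.1 hz).trans_lt hrs)
  refine hle.trans_lt ((norm_dslope_le_imageRadius_div hf hs.2 hzs).lt_of_ne fun heq => hnl ?_)
  have haffine := Complex.affine_of_mapsTo_ball_of_norm_dslope_eq_div
    (hf.mono (ball_subset_ball hs.2.le)) (mapsTo_ball_closedBall_imageRadius hf hs.2) hzs
    (heq.trans (div_eq_inv_mul _ _).symm)
  refine ⟨dslope f 0 z, f 0, eqOn_ball_one_of_eqOn_ball hf hs.1 fun w hw => ?_⟩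
  rw [haffine hw]
  simp only [sub_zero, smul_eq_mul]
  ring

lemma imageRadius_div_eq_of_affine {a b : ℂ} (hab : ∀ z ∈ ball (0 : ℂ) 1, f z = a * z + b)
    (hr₀ : 0 < r) (hr : r < 1) : r⁻¹ * imageRadius f r = ‖a‖ := by
  have hf : DifferentiableOn ℂ f (ball (0 : ℂ) 1) :=
    ((differentiableOn_id.const_mul a).add_const b).congr hab
  have hderiv : deriv f 0 = a := by
    rw [EventuallyEq.deriv_eq (eventually_of_mem (ball_mem_nhds _ one_pos) hab)]
    simp
  refine le_antisymm ((inv_mul_le_iff₀ hr₀).2 ?_)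
    (hderiv ▸ norm_deriv_le_imageRadius_div hf hr₀ hr)
  refine csSup_le ((nonempty_ball.2 hr₀).image _) ?_
  rintro _ ⟨z, hz, rfl⟩
  dsimp only
  rw [hab z (ball_subset_ball hr.le hz), hab 0 (mem_ball_self one_pos), mul_zero, zero_add,
    add_sub_cancel_right, norm_mul, mul_comm r]
  exact mul_le_mul_of_nonneg_left (mem_ball_zero_iff.1 hz).le (norm_nonneg a)

lemma tendsto_imageRadius_div (hf : DifferentiableOn ℂ f (ball (0 : ℂ) 1)) :
    Tendsto (fun r => r⁻¹ * imageRadius f r) (𝓝[>] 0) (𝓝 ‖deriv f 0‖) := by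
  have hIoo : ∀ᶠ r in 𝓝[>] (0 : ℝ), r ∈ Ioo (0 : ℝ) 1 := Ioo_mem_nhdsGT one_pos
  choose! z hz hle using fun r (hr : r ∈ Ioo (0 : ℝ) 1) =>
    exists_imageRadius_div_le_norm_dslope hf hr.1 hr.2
  have hz₀ : Tendsto z (𝓝[>] 0) (𝓝 0) :=
    squeeze_zero_norm' (hIoo.mono fun r hr => mem_closedBall_zero_iff.1 (hz r hr))
      (tendsto_nhdsWithin_of_tendsto_nhds tendsto_id)
  have hdslope : ContinuousAt (dslope f 0) 0 :=
    ((Complex.differentiableOn_dslope (ball_mem_nhds _ one_pos)).2 hf).continuousOn.continuousAt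
      (ball_mem_nhds _ one_pos)
  have hupper : Tendsto (fun r => ‖dslope f 0 (z r)‖) (𝓝[>] 0) (𝓝 ‖deriv f 0‖) := by
    simpa [Function.comp_def] using hdslope.norm.tendsto.comp hz₀
  exact tendsto_of_tendsto_of_tendsto_of_le_of_le' tendsto_const_nhds hupper
    (hIoo.mono fun r hr => norm_deriv_le_imageRadius_div hf hr.1 hr.2)
    (hIoo.mono fun r hr => hle r hr)

end

/-- Schwarz's Lemma, monotonicity form: `φ(r) = r⁻¹ · Rad f(rD)` is strictly
increasing on `(0,1)` unless `f` is linear, in which case it is constant;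
moreover `φ(r) → |f'(0)|` as `r → 0⁺`. -/
theorem schwarz_radius_monotone (f : ℂ → ℂ)
    (hf : DifferentiableOn ℂ f (ball (0 : ℂ) 1)) :
    (¬ (∃ a b : ℂ, ∀ z ∈ ball (0 : ℂ) 1, f z = a * z + b) →
      StrictMonoOn
        (fun r : ℝ => r⁻¹ * sSup ((fun z => ‖f z - f 0‖) '' ball (0 : ℂ) r))
        (Set.Ioo 0 1)) ∧
    ((∃ a b : ℂ, ∀ z ∈ ball (0 : ℂ) 1, f z = a * z + b) →
      ∀ r ∈ Set.Ioo (0 : ℝ) 1, ∀ s ∈ Set.Ioo (0 : ℝ) 1,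
        r⁻¹ * sSup ((fun z => ‖f z - f 0‖) '' ball (0 : ℂ) r) =
        s⁻¹ * sSup ((fun z => ‖f z - f 0‖) '' ball (0 : ℂ) s)) ∧
    Tendsto (fun r : ℝ => r⁻¹ * sSup ((fun z => ‖f z - f 0‖) '' ball (0 : ℂ) r))
      (nhdsWithin 0 (Set.Ioi 0)) (nhds (‖deriv f 0‖)) := by
  refine ⟨strictMonoOn_imageRadius_div hf, ?_, tendsto_imageRadius_div hf⟩
  rintro ⟨a, b, hab⟩ r hr s hs
  exact (imageRadius_div_eq_of_affine hab hr.1 hr.2).trans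
    (imageRadius_div_eq_of_affine hab hs.1 hs.2).symm
end

section
/- Let f be analytic on the unit disk D with Diam f(D) := sup_{z,w ∈ D} |f(z) - f(w)| = 2. Then Diam f(rD) ≤ 2r for every 0 < r < 1, and |f'(0)| ≤ 1. Moreover, equality holds in the first inequality for some 0 < r < 1, or in the second, if and only if f(z) = a + cz for some constants a ∈ ℂ and c with |c| = 1. -/
/-!
For `a`, `b` in the closed unit disk the chord map `ζ ↦ f (a ζ) - f (b ζ)` sends `𝔻` into the
disk of radius `2` and vanishes at `0`, so Schwarz's lemma bounds it by `2 |ζ|`. Taking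
`a = z / s`, `b = w / s`, `ζ = s` with `s = max |z| |w|` gives `|f z - f w| ≤ 2 max |z| |w|`, hence
`Diam f(r𝔻) ≤ 2r`; taking `a = 1`, `b = -1` gives `|f'(0)| ≤ 1`.

If `Diam f(r𝔻) = 2r`, the diameter is attained on the closed disk of radius `r`, and the
corresponding chord map is extremal in Schwarz's lemma, which forces `|f'(0)| = 1`.

If `|f'(0)| = 1`, the equality case of Schwarz's lemma gives `f z - f (-z) = 2 f'(0) z`. For
`w ≠ 0` the function `μ ↦ f (-w) - f (μ w)` then attains its maximal modulus on the unit circle at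
`μ = 1`, so its derivative there is tangent to that circle; this says that `conj f'(0) · f'(w)` is
real. A real-valued holomorphic function on the disk is constant by the open mapping theorem, so
`f' ≡ f'(0)` and `f` is affine.
-/

open Metric Set ComplexConjugate

theorem mul_mem_ball_zero_one {R : Type*} [SeminormedRing R] {a x : R}
    (ha : a ∈ closedBall (0 : R) 1) (hx : x ∈ ball (0 : R) 1) : a * x ∈ ball (0 : R) 1 := by
  rw [mem_closedBall_zero_iff] at ha
  rw [mem_ball_zero_iff] at hx ⊢
  calc ‖a * x‖ ≤ ‖a‖ * ‖x‖ := norm_mul_le a x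
    _ ≤ 1 * ‖x‖ := by gcongr
    _ < 1 := by rwa [one_mul]

theorem IsCompact.exists_edist_eq_ediam {X : Type*} [PseudoEMetricSpace X] {s : Set X}
    (hs : IsCompact s) (hne : s.Nonempty) : ∃ x ∈ s, ∃ y ∈ s, edist x y = ediam s := by
  obtain ⟨⟨x, y⟩, ⟨hx, hy⟩, hmax⟩ :=
    (hs.prod hs).exists_isMaxOn (hne.prod hne) continuous_edist.continuousOn
  exact ⟨x, hx, y, hy, le_antisymm (edist_le_ediam_of_mem hx hy)
    (ediam_le fun p hp q hq => hmax (mk_mem_prod hp hq))⟩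

theorem AnalyticOnNhd.exists_eq_const_of_im_eq_zero {g : ℂ → ℂ} {U : Set ℂ}
    (hg : AnalyticOnNhd ℂ g U) (hU : IsPreconnected U) (hUo : IsOpen U) (hne : U.Nonempty)
    (him : ∀ z ∈ U, (g z).im = 0) : ∃ w, ∀ z ∈ U, g z = w := by
  refine (hg.is_constant_or_isOpen hU).resolve_right fun hopen => ?_
  obtain ⟨z, hz⟩ := hne
  have hsub : g '' U ⊆ interior {w : ℂ | w.im ≤ 0} :=
    (hopen U subset_rfl hUo).subset_interior_iff.mpr <| by
      rintro _ ⟨u, hu, rfl⟩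
      exact (him u hu).le
  rw [Complex.interior_setOfPred_im_le] at hsub
  exact (him z hz).not_lt (hsub (mem_image_of_mem g hz))

/-- At a point of the unit circle where `‖Φ‖` is maximal on the circle, the derivative of `Φ`
along the circle is orthogonal to `Φ`. -/
theorem im_conj_mul_eq_zero_of_norm_le_on_circle {Φ : ℂ → ℂ} {D : ℂ} (hΦ : HasDerivAt Φ D 1)
    (hmax : ∀ θ : ℝ, ‖Φ (circleMap 0 1 θ)‖ ≤ ‖Φ 1‖) : (conj (Φ 1) * D).im = 0 := by
  have h₀ : circleMap 0 1 0 = 1 := by simp [circleMap]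
  have hq : HasDerivAt (fun θ => Φ (circleMap 0 1 θ)) (D * Complex.I) 0 := by
    have hc := hasDerivAt_circleMap 0 1 0
    rw [h₀, one_mul] at hc
    exact (h₀ ▸ hΦ).comp 0 hc
  have hlocmax : IsLocalMax (fun θ => ‖Φ (circleMap 0 1 θ)‖ ^ 2) 0 :=
    Filter.Eventually.of_forall fun θ => by simp only [h₀]; gcongr; exact hmax θ
  have := hlocmax.hasDerivAt_eq_zero hq.norm_sq
  rw [h₀, Complex.inner] at this
  simp [Complex.mul_re, Complex.mul_im] at this ⊢
  linarith

theorem Complex.deriv_eq_dslope_of_norm_dslope_eq_div {E : Type*} [NormedAddCommGroup E]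
    [NormedSpace ℂ E] [StrictConvexSpace ℝ E] {f : ℂ → E} {c z₀ : ℂ} {R₁ R₂ : ℝ}
    (hd : DifferentiableOn ℂ f (ball c R₁)) (h_maps : MapsTo f (ball c R₁) (closedBall (f c) R₂))
    (h_z₀ : z₀ ∈ ball c R₁) (h_eq : ‖dslope f c z₀‖ = R₂ / R₁) :
    deriv f c = dslope f c z₀ := by
  have hR₁ : 0 < R₁ := nonempty_ball.mp ⟨_, h_z₀⟩
  have haffine := (Complex.affine_of_mapsTo_ball_of_norm_dslope_eq_div hd h_maps h_z₀ h_eq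
    ).eventuallyEq_of_mem (ball_mem_nhds c hR₁)
  rw [haffine.deriv_eq]
  simpa using (((hasDerivAt_id c).sub_const c).smul_const (dslope f c z₀)).const_add (f c) |>.deriv

namespace LandauToeplitz

def chord (f : ℂ → ℂ) (a b ζ : ℂ) : ℂ := f (a * ζ) - f (b * ζ)

variable {f : ℂ → ℂ} {a b : ℂ}

theorem chord_zero : chord f a b 0 = 0 := by simp [chord]

theorem differentiableOn_chord (hf : DifferentiableOn ℂ f (ball 0 1))
    (ha : a ∈ closedBall (0 : ℂ) 1) (hb : b ∈ closedBall (0 : ℂ) 1) :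
    DifferentiableOn ℂ (chord f a b) (ball 0 1) :=
  (hf.comp (by fun_prop) fun _ hζ => mul_mem_ball_zero_one ha hζ).sub
    (hf.comp (by fun_prop) fun _ hζ => mul_mem_ball_zero_one hb hζ)

theorem hasDerivAt_chord_zero (hf : DifferentiableAt ℂ f 0) :
    HasDerivAt (chord f a b) (deriv f 0 * (a - b)) 0 := by
  have hcomp (a : ℂ) : HasDerivAt (fun ζ => f (a * ζ)) (deriv f 0 * a) 0 := by
    have hf' : HasDerivAt f (deriv f 0) (a * 0) := by simpa using hf.hasDerivAt
    exact hf'.comp 0 (by simpa using (hasDerivAt_id (0 : ℂ)).const_mul a)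
  rw [mul_sub]
  exact (hcomp a).sub (hcomp b)

theorem mapsTo_chord (hd : ∀ z ∈ ball (0 : ℂ) 1, ∀ w ∈ ball (0 : ℂ) 1, dist (f z) (f w) ≤ 2)
    (ha : a ∈ closedBall (0 : ℂ) 1) (hb : b ∈ closedBall (0 : ℂ) 1) :
    MapsTo (chord f a b) (ball 0 1) (closedBall (chord f a b 0) 2) := fun ζ hζ => by
  rw [chord_zero, mem_closedBall_zero_iff, chord, ← dist_eq_norm]
  exact hd _ (mul_mem_ball_zero_one ha hζ) _ (mul_mem_ball_zero_one hb hζ)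

variable (hf : DifferentiableOn ℂ f (ball 0 1))
  (hd : ∀ z ∈ ball (0 : ℂ) 1, ∀ w ∈ ball (0 : ℂ) 1, dist (f z) (f w) ≤ 2)
include hf hd

theorem norm_chord_le (ha : a ∈ closedBall (0 : ℂ) 1) (hb : b ∈ closedBall (0 : ℂ) 1)
    {ζ : ℂ} (hζ : ζ ∈ ball (0 : ℂ) 1) : ‖chord f a b ζ‖ ≤ 2 * ‖ζ‖ := by
  simpa [chord_zero] using Complex.dist_le_div_mul_dist_of_mapsTo_ball
    (differentiableOn_chord hf ha hb) (mapsTo_chord hd ha hb) hζ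

theorem dist_le_two_mul_max_norm {z w : ℂ} (hz : z ∈ ball (0 : ℂ) 1) (hw : w ∈ ball (0 : ℂ) 1) :
    dist (f z) (f w) ≤ 2 * max ‖z‖ ‖w‖ := by
  set s := max ‖z‖ ‖w‖
  rcases ((norm_nonneg z).trans (le_max_left _ _) : 0 ≤ s).eq_or_lt with hs | hs
  · have hz0 : z = 0 := norm_le_zero_iff.mp (hs ▸ le_max_left _ _)
    have hw0 : w = 0 := norm_le_zero_iff.mp (hs ▸ le_max_right _ _)
    simp [hz0, hw0, hs.le]
  have hsC : (s : ℂ) ≠ 0 := Complex.ofReal_ne_zero.mpr hs.ne'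
  have hdiv {u : ℂ} (hu : ‖u‖ ≤ s) : u / s ∈ closedBall (0 : ℂ) 1 := by
    rw [mem_closedBall_zero_iff, norm_div, Complex.norm_real, Real.norm_of_nonneg hs.le]
    exact div_le_one_of_le₀ hu hs.le
  have hs1 : (s : ℂ) ∈ ball (0 : ℂ) 1 := by
    rw [mem_ball_zero_iff, Complex.norm_real, Real.norm_of_nonneg hs.le]
    exact max_lt (mem_ball_zero_iff.mp hz) (mem_ball_zero_iff.mp hw)
  have := norm_chord_le hf hd (hdiv (le_max_left _ _)) (hdiv (le_max_right _ _)) hs1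
  rwa [chord, div_mul_cancel₀ _ hsC, div_mul_cancel₀ _ hsC, ← dist_eq_norm, Complex.norm_real,
    Real.norm_of_nonneg hs.le] at this

theorem norm_deriv_le_one : ‖deriv f 0‖ ≤ 1 := by
  have hone : (1 : ℂ) ∈ closedBall (0 : ℂ) 1 := by simp
  have hmone : (-1 : ℂ) ∈ closedBall (0 : ℂ) 1 := by simp
  have := Complex.norm_deriv_le_div_of_mapsTo_ball (differentiableOn_chord hf hone hmone)
    (mapsTo_chord hd hone hmone) one_pos
  rw [(hasDerivAt_chord_zero (hf.differentiableAt (ball_mem_nhds 0 one_pos))).deriv] at this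
  norm_num [norm_mul] at this
  linarith

theorem sub_neg_eq_of_norm_deriv_eq_one (h1 : ‖deriv f 0‖ = 1) {z : ℂ} (hz : z ∈ ball (0 : ℂ) 1) :
    f z - f (-z) = 2 * deriv f 0 * z := by
  have hone : (1 : ℂ) ∈ closedBall (0 : ℂ) 1 := by simp
  have hmone : (-1 : ℂ) ∈ closedBall (0 : ℂ) 1 := by simp
  have hderiv := (hasDerivAt_chord_zero (a := 1) (b := -1)
    (hf.differentiableAt (ball_mem_nhds 0 one_pos))).deriv
  have heq : ‖dslope (chord f 1 (-1)) 0 0‖ = 2 / 1 := by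
    rw [dslope_same, hderiv, norm_mul, h1]
    norm_num
  have := Complex.affine_of_mapsTo_ball_of_norm_dslope_eq_div (differentiableOn_chord hf hone hmone)
    (mapsTo_chord hd hone hmone) (mem_ball_self one_pos) heq hz
  rw [dslope_same, hderiv, chord_zero] at this
  simp only [chord, one_mul, neg_one_mul] at this
  rw [this]
  ring

theorem im_conj_deriv_mul_deriv_eq_zero (h1 : ‖deriv f 0‖ = 1) {w : ℂ}
    (hw : w ∈ ball (0 : ℂ) 1) : (conj (deriv f 0) * deriv f w).im = 0 := by
  rcases eq_or_ne w 0 with rfl | hw0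
  · rw [Complex.conj_mul', ← Complex.ofReal_pow, Complex.ofReal_im]
  have hmw : -w ∈ ball (0 : ℂ) 1 := by rwa [mem_ball_zero_iff, norm_neg, ← mem_ball_zero_iff]
  set Φ : ℂ → ℂ := fun μ => f (-w) - f (μ * w)
  have hΦ1 : Φ 1 = -(2 * deriv f 0 * w) := by
    simp only [Φ, one_mul]
    rw [← sub_neg_eq_of_norm_deriv_eq_one hf hd h1 hw]
    ring
  have hΦ : HasDerivAt Φ (-(deriv f w * w)) 1 := by
    have hfw : HasDerivAt f (deriv f w) (1 * w) := by
      simpa using (hf.differentiableAt (isOpen_ball.mem_nhds hw)).hasDerivAt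
    simpa using (hfw.comp 1 ((hasDerivAt_id (1 : ℂ)).mul_const w)).const_sub (f (-w))
  have hmax (θ : ℝ) : ‖Φ (circleMap 0 1 θ)‖ ≤ ‖Φ 1‖ := by
    have hμ : ‖circleMap 0 1 θ * w‖ = ‖w‖ := by simp
    have hμw : circleMap 0 1 θ * w ∈ ball (0 : ℂ) 1 := by
      rw [mem_ball_zero_iff, hμ]
      exact mem_ball_zero_iff.mp hw
    have := dist_le_two_mul_max_norm hf hd hmw hμw
    rw [norm_neg, hμ, max_self, dist_eq_norm] at this
    rwa [hΦ1, norm_neg, norm_mul, norm_mul, h1, Complex.norm_two, mul_one]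
  have := im_conj_mul_eq_zero_of_norm_le_on_circle hΦ hmax
  rw [hΦ1] at this
  have hw2 : (0 : ℝ) < 2 * ‖w‖ ^ 2 := by positivity
  have key : conj (-(2 * deriv f 0 * w)) * -(deriv f w * w)
      = ((2 * ‖w‖ ^ 2 : ℝ) : ℂ) * (conj (deriv f 0) * deriv f w) := by
    have hnorm : (((2 * ‖w‖ ^ 2 : ℝ)) : ℂ) = 2 * (conj w * w) := by
      rw [Complex.conj_mul']
      push_cast
      ring
    rw [hnorm]
    simp only [map_neg, map_mul, map_ofNat]
    ring
  rw [key, Complex.im_ofReal_mul] at this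
  exact (mul_eq_zero.mp this).resolve_left hw2.ne'

theorem eqOn_affine_of_norm_deriv_eq_one (h1 : ‖deriv f 0‖ = 1) :
    EqOn f (fun z => f 0 + deriv f 0 * z) (ball 0 1) := by
  set c := deriv f 0
  have hG : AnalyticOnNhd ℂ (fun w => conj c * deriv f w) (ball 0 1) :=
    analyticOnNhd_const.mul (hf.analyticOnNhd isOpen_ball).deriv
  obtain ⟨v, hv⟩ := hG.exists_eq_const_of_im_eq_zero (convex_ball 0 1).isPreconnected isOpen_ball
    ⟨0, mem_ball_self one_pos⟩ fun w hw => im_conj_deriv_mul_deriv_eq_zero hf hd h1 hw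
  have hcc : c * conj c = 1 := by rw [Complex.mul_conj', h1]; norm_num
  have hderiv {w : ℂ} (hw : w ∈ ball (0 : ℂ) 1) : deriv f w = c := by
    have hv0 : conj c * c = v := hv 0 (mem_ball_self one_pos)
    calc deriv f w = c * (conj c * deriv f w) := by rw [← mul_assoc, hcc, one_mul]
      _ = c * (conj c * c) := by rw [hv w hw, hv0]
      _ = c := by rw [← mul_assoc, hcc, one_mul]
  refine isOpen_ball.eqOn_of_deriv_eq (convex_ball 0 1).isPreconnected hf (by fun_prop)
    (fun w hw => ?_) (mem_ball_self one_pos) (by simp)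
  rw [hderiv hw]
  exact ((hasDerivAt_id w).const_mul c |>.const_add (f 0) |>.deriv.trans (mul_one c)).symm

theorem exists_dist_eq_of_ediam_eq {r : ℝ} (hr : r ∈ Ioo (0 : ℝ) 1)
    (h : ediam (f '' ball 0 r) = ENNReal.ofReal (2 * r)) :
    ∃ z₁ ∈ closedBall (0 : ℂ) r, ∃ z₂ ∈ closedBall (0 : ℂ) r, dist (f z₁) (f z₂) = 2 * r := by
  have hsub : closedBall (0 : ℂ) r ⊆ ball 0 1 := closedBall_subset_ball hr.2
  obtain ⟨_, ⟨z₁, hz₁, rfl⟩, _, ⟨z₂, hz₂, rfl⟩, hmax⟩ :=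
    ((isCompact_closedBall 0 r).image_of_continuousOn
      (hf.continuousOn.mono hsub)).exists_edist_eq_ediam ((nonempty_closedBall.mpr hr.1.le).image f)
  refine ⟨z₁, hz₁, z₂, hz₂, le_antisymm ?_ ?_⟩
  · refine (dist_le_two_mul_max_norm hf hd (hsub hz₁) (hsub hz₂)).trans ?_
    gcongr
    exact max_le (mem_closedBall_zero_iff.mp hz₁) (mem_closedBall_zero_iff.mp hz₂)
  · rw [← ENNReal.ofReal_le_ofReal_iff dist_nonneg, ← edist_dist, hmax, ← h]
    exact ediam_mono (image_mono ball_subset_closedBall)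

theorem norm_deriv_eq_one_of_ediam_eq {r : ℝ} (hr : r ∈ Ioo (0 : ℝ) 1)
    (h : ediam (f '' ball 0 r) = ENNReal.ofReal (2 * r)) : ‖deriv f 0‖ = 1 := by
  obtain ⟨z₁, hz₁, z₂, hz₂, hdist⟩ := exists_dist_eq_of_ediam_eq hf hd hr h
  -- Rescaled to the unit disk, the extremal pair gives a chord map attaining the Schwarz bound.
  have hrC : (r : ℂ) ≠ 0 := Complex.ofReal_ne_zero.mpr hr.1.ne'
  have hdiv {u : ℂ} (hu : u ∈ closedBall (0 : ℂ) r) : u / r ∈ closedBall (0 : ℂ) 1 := by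
    rw [mem_closedBall_zero_iff, norm_div, Complex.norm_real, Real.norm_of_nonneg hr.1.le]
    exact div_le_one_of_le₀ (mem_closedBall_zero_iff.mp hu) hr.1.le
  have ha := hdiv hz₁
  have hb := hdiv hz₂
  have hr1 : (r : ℂ) ∈ ball (0 : ℂ) 1 := by
    rw [mem_ball_zero_iff, Complex.norm_real, Real.norm_of_nonneg hr.1.le]
    exact hr.2
  have heq : ‖dslope (chord f (z₁ / r) (z₂ / r)) 0 r‖ = 2 / 1 := by
    rw [dslope_of_ne _ hrC, slope_def_field, chord_zero, chord, div_mul_cancel₀ _ hrC,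
      div_mul_cancel₀ _ hrC, sub_zero, sub_zero, norm_div, ← dist_eq_norm, hdist, Complex.norm_real,
      Real.norm_of_nonneg hr.1.le, mul_div_cancel_right₀ _ hr.1.ne', div_one]
  have hderiv := Complex.deriv_eq_dslope_of_norm_dslope_eq_div (differentiableOn_chord hf ha hb)
    (mapsTo_chord hd ha hb) hr1 heq
  rw [(hasDerivAt_chord_zero (hf.differentiableAt (ball_mem_nhds 0 one_pos))).deriv] at hderiv
  have hnorm : ‖deriv f 0‖ * ‖z₁ / r - z₂ / r‖ = 2 := by rw [← norm_mul, hderiv, heq, div_one]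
  have hab : ‖z₁ / r - z₂ / r‖ ≤ 2 := by
    have := norm_sub_le (z₁ / r) (z₂ / r)
    rw [mem_closedBall_zero_iff] at ha hb
    linarith
  have hle := norm_deriv_le_one hf hd
  nlinarith [norm_nonneg (deriv f 0)]

theorem ediam_image_ball_le {r : ℝ} (hr : r ≤ 1) :
    ediam (f '' ball 0 r) ≤ ENNReal.ofReal (2 * r) := by
  refine ediam_image_le_iff.mpr fun z hz w hw => ?_
  rw [edist_dist]
  refine ENNReal.ofReal_le_ofReal <| (dist_le_two_mul_max_norm hf hd (ball_subset_ball hr hz)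
    (ball_subset_ball hr hw)).trans ?_
  gcongr
  exact max_le (mem_ball_zero_iff.mp hz).le (mem_ball_zero_iff.mp hw).le

end LandauToeplitz

open LandauToeplitz in
/-- The Landau–Toeplitz theorem: if `f` is analytic on the unit disk with
`Diam f(𝔻) = 2`, then `Diam f(r𝔻) ≤ 2r` for `0 < r < 1` and `|f'(0)| ≤ 1`,
with equality (in the first for some `r`, or in the second) iff
`f(z) = a + cz` with `|c| = 1`. -/
theorem landau_toeplitz (f : ℂ → ℂ)
    (hf : DifferentiableOn ℂ f (ball (0 : ℂ) 1))
    (hdiam : EMetric.diam (f '' ball (0 : ℂ) 1) = ENNReal.ofReal 2) :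
    (∀ r : ℝ, r ∈ Set.Ioo (0 : ℝ) 1 →
      EMetric.diam (f '' ball (0 : ℂ) r) ≤ ENNReal.ofReal (2 * r)) ∧
    ‖deriv f 0‖ ≤ 1 ∧
    (((∃ r ∈ Set.Ioo (0 : ℝ) 1,
        EMetric.diam (f '' ball (0 : ℂ) r) = ENNReal.ofReal (2 * r)) ∨
      ‖deriv f 0‖ = 1) ↔
      ∃ a c : ℂ, ‖c‖ = 1 ∧ ∀ z ∈ ball (0 : ℂ) 1, f z = a + c * z) := by
  have hd : ∀ z ∈ ball (0 : ℂ) 1, ∀ w ∈ ball (0 : ℂ) 1, dist (f z) (f w) ≤ 2 := fun z hz w hw =>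
    (ENNReal.ofReal_le_ofReal_iff zero_le_two).mp <| edist_dist (f z) (f w) ▸
      hdiam ▸ edist_le_ediam_of_mem (mem_image_of_mem f hz) (mem_image_of_mem f hw)
  refine ⟨fun r hr => ediam_image_ball_le hf hd hr.2.le, norm_deriv_le_one hf hd, ?_, ?_⟩
  · intro h
    have h1 : ‖deriv f 0‖ = 1 :=
      h.elim (fun ⟨_, hr, heq⟩ => norm_deriv_eq_one_of_ediam_eq hf hd hr heq) id
    exact ⟨_, _, h1, eqOn_affine_of_norm_deriv_eq_one hf hd h1⟩
  · rintro ⟨a, c, hc, hfe⟩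
    right
    have hev : f =ᶠ[nhds 0] fun z => a + c * z :=
      Filter.eventuallyEq_of_mem (ball_mem_nhds 0 one_pos) hfe
    rw [hev.deriv_eq]
    simpa using hc
end

section
/- Let g be analytic on the unit disk D, let 0 < r < 1 and |w| = r, and suppose g(w) = w and max_{|z|=r} |g(z)| = r. Then Im g'(w) = 0. -/
open Metric Set

/-!
Along the circle `θ ↦ w e^{iθ}` the function `θ ↦ ‖g (w e^{iθ})‖²` is maximal at `θ = 0`, so its
derivative there, `2 Re (conj (g w) · i w g'(w)) = -2 |w|² Im g'(w)`, vanishes.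
-/

open ComplexConjugate

theorem IsLocalMax.inner_eq_zero_of_hasDerivAt {F : Type*} [NormedAddCommGroup F]
    [InnerProductSpace ℝ F] {f : ℝ → F} {f' : F} {x : ℝ}
    (hmax : IsLocalMax (‖f ·‖) x) (hf : HasDerivAt f f' x) : inner ℝ (f x) f' = 0 := by
  have hsq : IsLocalMax (‖f ·‖ ^ 2) x :=
    hmax.mono fun y hy => pow_le_pow_left₀ (norm_nonneg _) hy 2
  simpa using hsq.hasDerivAt_eq_zero hf.norm_sq

theorem hasDerivAt_comp_mul_exp_mul_I {g : ℂ → ℂ} {w : ℂ} (hg : DifferentiableAt ℂ g w) :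
    HasDerivAt (fun θ : ℝ => g (w * Complex.exp (θ * Complex.I)))
      (w * Complex.I * deriv g w) 0 := by
  have hcircle : HasDerivAt (fun θ : ℝ => w * Complex.exp (θ * Complex.I)) (w * Complex.I) 0 := by
    simpa using (((Complex.ofRealCLM.hasDerivAt (x := 0)).mul_const Complex.I).cexp).const_mul w
  have hg' : HasDerivAt g (deriv g w) (w * Complex.exp ((0 : ℝ) * Complex.I)) := by
    simpa using hg.hasDerivAt
  rw [mul_comm]
  exact hg'.comp (0 : ℝ) hcircle

theorem im_deriv_eq_zero_of_isLocalMax_norm_on_circle {g : ℂ → ℂ} {w : ℂ}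
    (hg : DifferentiableAt ℂ g w) (hw : w ≠ 0) (hfix : g w = w)
    (hmax : IsLocalMax (fun θ : ℝ => ‖g (w * Complex.exp (θ * Complex.I))‖) 0) :
    (deriv g w).im = 0 := by
  have h := hmax.inner_eq_zero_of_hasDerivAt (hasDerivAt_comp_mul_exp_mul_I hg)
  have hconj : w * Complex.I * deriv g w * conj w =
      (Complex.normSq w : ℂ) * (Complex.I * deriv g w) := by
    rw [Complex.normSq_eq_conj_mul_self]; ring
  simp only [Complex.ofReal_zero, zero_mul, Complex.exp_zero, mul_one, hfix, Complex.inner,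
    hconj, Complex.re_ofReal_mul, Complex.I_mul_re, mul_neg, neg_eq_zero] at h
  exact (mul_eq_zero.mp h).resolve_left (Complex.normSq_pos.mpr hw).ne'

/-- If `g` is analytic on the unit disk, `0 < r < 1`, `|w| = r`, `g(w) = w`,
and `|g|` attains the value `r` as its maximum on the circle `|z| = r`, then
`Im g'(w) = 0`. -/
theorem fixed_point_deriv_real (g : ℂ → ℂ)
    (hg : DifferentiableOn ℂ g (ball (0 : ℂ) 1))
    (r : ℝ) (hr : r ∈ Set.Ioo (0 : ℝ) 1) (w : ℂ) (hw : ‖w‖ = r)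
    (hfix : g w = w)
    (hmax : ∀ z : ℂ, ‖z‖ = r → ‖g z‖ ≤ r) :
    (deriv g w).im = 0 := by
  have hw_ball : w ∈ ball (0 : ℂ) 1 := mem_ball_zero_iff.mpr (hw ▸ hr.2)
  have hw_ne : w ≠ 0 := norm_pos_iff.mp (hw ▸ hr.1)
  refine im_deriv_eq_zero_of_isLocalMax_norm_on_circle
    (hg.differentiableAt (isOpen_ball.mem_nhds hw_ball)) hw_ne hfix ?_
  refine Filter.Eventually.of_forall fun θ => ?_
  simpa [hfix, hw] using hmax _ (by simp [hw])
end

section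
/- The n-diameter of the closed unit disk equals n^{1/(n-1)}, and it is attained exactly at the n-th roots of unity, up to rotation. -/
open Metric Set

noncomputable def nDiam (n : ℕ) (E : Set ℂ) : ℝ :=
  sSup {x : ℝ | ∃ ζ : Fin n → ℂ, (∀ i, ζ i ∈ E) ∧
    x = (∏ p ∈ Finset.univ.filter (fun p : Fin n × Fin n => p.1 < p.2),
        ‖ζ p.1 - ζ p.2‖) ^ (2 / ((n : ℝ) * ((n : ℝ) - 1)))}

open Finset Matrix ComplexConjugate
open scoped ComplexOrder

/-!
With `V` the Vandermonde matrix of `ζ`, the product of the pairwise distances is `|det V|`, and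
`|det V|² = det (V Vᴴ)`. The Gram matrix `V Vᴴ` is positive semidefinite with entries
`∑_{k<n} (ζ_j conj ζ_l)^k`, so on the closed disk its trace is at most `n²`, and AM-GM on its
eigenvalues gives `|det V|² ≤ n^n`, with equality iff `V Vᴴ = n • 1`. This says that `|ζ_j| = 1`
and that `ζ_j conj ζ_l` is an `n`-th root of unity other than `1` for `j ≠ l`: the `ζ_j` are `n`
distinct points of the unit circle with a common `n`-th power, i.e. a rotated copy of the `n`-th
roots of unity.
-/

namespace Real

variable {ι : Type*} [Fintype ι] {z : ι → ℝ}

theorem prod_eq_geom_mean_pow [Nonempty ι] (hz : ∀ i, 0 ≤ z i) :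
    ∏ i, z i = (∏ i, z i ^ ((Fintype.card ι : ℝ)⁻¹)) ^ Fintype.card ι := by
  rw [finsetProd_rpow _ _ fun i _ ↦ hz i,
    rpow_inv_natCast_pow (prod_nonneg fun i _ ↦ hz i) Fintype.card_ne_zero]

theorem sum_inv_card_mul_eq_sum_div (z : ι → ℝ) :
    ∑ i, (Fintype.card ι : ℝ)⁻¹ * z i = (∑ i, z i) / Fintype.card ι := by
  rw [← mul_sum, inv_mul_eq_div]

theorem prod_le_mean_pow [Nonempty ι] (hz : ∀ i, 0 ≤ z i) :
    ∏ i, z i ≤ ((∑ i, z i) / Fintype.card ι) ^ Fintype.card ι := by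
  have hw : ∑ _i : ι, (Fintype.card ι : ℝ)⁻¹ = 1 := by simp
  rw [prod_eq_geom_mean_pow hz, ← sum_inv_card_mul_eq_sum_div]
  exact pow_le_pow_left₀ (prod_nonneg fun i _ ↦ rpow_nonneg (hz i) _)
    (geom_mean_le_arith_mean_weighted _ _ _ (fun _ _ ↦ by positivity) hw fun i _ ↦ hz i) _

theorem prod_eq_mean_pow_iff [Nonempty ι] (hz : ∀ i, 0 ≤ z i) :
    ∏ i, z i = ((∑ i, z i) / Fintype.card ι) ^ Fintype.card ι ↔
      ∀ i, z i = (∑ i, z i) / Fintype.card ι := by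
  have hw : ∑ _i : ι, (Fintype.card ι : ℝ)⁻¹ = 1 := by simp
  rw [prod_eq_geom_mean_pow hz, ← sum_inv_card_mul_eq_sum_div,
    pow_left_inj₀ (prod_nonneg fun i _ ↦ rpow_nonneg (hz i) _)
      (sum_nonneg fun i _ ↦ mul_nonneg (by positivity) (hz i)) Fintype.card_ne_zero,
    geom_mean_eq_arith_mean_weighted_iff_of_pos' _ _ _ (fun _ _ ↦ by positivity) hw
      fun i _ ↦ hz i]
  simp

end Real

namespace Matrix

variable {ι 𝕜 : Type*} [Fintype ι] [DecidableEq ι] [RCLike 𝕜] {A : Matrix ι ι 𝕜}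

theorem IsHermitian.eq_smul_one_of_eigenvalues_eq (hA : A.IsHermitian) {c : ℝ}
    (h : ∀ i, hA.eigenvalues i = c) : A = (c : 𝕜) • 1 := by
  have hdiag : diagonal (RCLike.ofReal ∘ hA.eigenvalues) = (c : 𝕜) • (1 : Matrix ι ι 𝕜) := by
    rw [smul_one_eq_diagonal]
    exact congrArg diagonal (funext fun i ↦ by simp [h i])
  rw [hA.spectral_theorem, hdiag, map_smul, map_one]

namespace PosSemidef

theorem re_det_eq_prod_eigenvalues (hA : A.PosSemidef) :
    RCLike.re A.det = ∏ i, hA.1.eigenvalues i := by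
  rw [hA.1.det_eq_prod_eigenvalues, ← RCLike.ofReal_prod, RCLike.ofReal_re]

theorem re_trace_eq_sum_eigenvalues (hA : A.PosSemidef) :
    RCLike.re A.trace = ∑ i, hA.1.eigenvalues i := by
  simp [hA.1.trace_eq_sum_eigenvalues]

theorem re_det_le_pow (hA : A.PosSemidef) {c : ℝ}
    (htr : RCLike.re A.trace ≤ Fintype.card ι * c) :
    RCLike.re A.det ≤ c ^ Fintype.card ι := by
  cases isEmpty_or_nonempty ι
  · simp
  have hcard : (0 : ℝ) < Fintype.card ι := by exact_mod_cast Fintype.card_pos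
  have hev := hA.eigenvalues_nonneg
  rw [re_trace_eq_sum_eigenvalues hA] at htr
  rw [re_det_eq_prod_eigenvalues hA]
  refine (Real.prod_le_mean_pow hev).trans (pow_le_pow_left₀ ?_ ?_ _)
  · exact div_nonneg (sum_nonneg fun i _ ↦ hev i) hcard.le
  · rwa [div_le_iff₀' hcard]

theorem re_det_eq_pow_iff (hA : A.PosSemidef) {c : ℝ}
    (htr : RCLike.re A.trace ≤ Fintype.card ι * c) :
    RCLike.re A.det = c ^ Fintype.card ι ↔ A = (c : 𝕜) • 1 := by
  refine ⟨fun hdet ↦ ?_, fun hA ↦ by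
    rw [hA, det_smul, det_one, mul_one, ← RCLike.ofReal_pow, RCLike.ofReal_re]⟩
  cases isEmpty_or_nonempty ι
  · exact Subsingleton.elim _ _
  have hcard : (0 : ℝ) < Fintype.card ι := by exact_mod_cast Fintype.card_pos
  have hev := hA.eigenvalues_nonneg
  rw [re_trace_eq_sum_eigenvalues hA] at htr
  rw [re_det_eq_prod_eigenvalues hA] at hdet
  set m := (∑ i, hA.1.eigenvalues i) / Fintype.card ι
  have hm0 : 0 ≤ m := div_nonneg (sum_nonneg fun i _ ↦ hev i) hcard.le
  have hmc : m ≤ c := by rwa [div_le_iff₀' hcard]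
  -- `c ^ N = ∏ λ ≤ m ^ N ≤ c ^ N` forces `m = c` and equality in AM-GM
  have hmN : m ^ Fintype.card ι = c ^ Fintype.card ι :=
    le_antisymm (pow_le_pow_left₀ hm0 hmc _) (hdet ▸ Real.prod_le_mean_pow hev)
  have hm : m = c := (pow_left_inj₀ hm0 (hm0.trans hmc) Fintype.card_ne_zero).mp hmN
  refine hA.1.eq_smul_one_of_eigenvalues_eq fun i ↦ ?_
  rw [← hm]
  exact (Real.prod_eq_mean_pow_iff hev).mp (hdet.trans hmN.symm) i

end PosSemidef
end Matrix

theorem prod_norm_sub_eq_norm_det_vandermonde {n : ℕ} (ζ : Fin n → ℂ) :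
    ∏ p ∈ univ.filter (fun p : Fin n × Fin n => p.1 < p.2), ‖ζ p.1 - ζ p.2‖ =
      ‖(vandermonde ζ).det‖ := by
  rw [det_vandermonde, norm_prod, prod_filter, Fintype.prod_prod_type]
  refine prod_congr rfl fun i _ ↦ ?_
  rw [norm_prod, ← prod_filter, filter_lt_eq_Ioi]
  exact prod_congr rfl fun j _ ↦ norm_sub_rev _ _

theorem re_det_vandermonde_mul_conjTranspose {n : ℕ} (ζ : Fin n → ℂ) :
    (vandermonde ζ * (vandermonde ζ)ᴴ).det.re = ‖(vandermonde ζ).det‖ ^ 2 := by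
  rw [det_mul, det_conjTranspose, Complex.star_def, Complex.mul_conj']
  norm_cast

theorem vandermonde_mul_conjTranspose_apply {n : ℕ} (ζ : Fin n → ℂ) (j l : Fin n) :
    (vandermonde ζ * (vandermonde ζ)ᴴ) j l = ∑ k ∈ range n, (ζ j * conj (ζ l)) ^ k := by
  simp [mul_apply, vandermonde_apply, mul_pow,
    Fin.sum_univ_eq_sum_range (fun k ↦ ζ j ^ k * conj (ζ l) ^ k)]

theorem geom_sum_eq_zero_iff_pow_eq_one {K : Type*} [Field K] [CharZero K] {n : ℕ} (hn : n ≠ 0)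
    {w : K} : ∑ k ∈ range n, w ^ k = 0 ↔ w ^ n = 1 ∧ w ≠ 1 := by
  rcases eq_or_ne w 1 with rfl | hw
  · simp [hn]
  rw [geom_sum_eq hw, div_eq_zero_iff, sub_eq_zero, sub_eq_zero]
  simp [hw]

theorem Real.geom_sum_eq_natCast_iff {n : ℕ} (hn : 2 ≤ n) {t : ℝ} (h0 : 0 ≤ t) (h1 : t ≤ 1) :
    ∑ k ∈ range n, t ^ k = n ↔ t = 1 := by
  refine ⟨fun h ↦ ?_, fun h ↦ by simp [h]⟩
  have hle : ∀ k ∈ range n, t ^ k ≤ 1 := fun k _ ↦ pow_le_one₀ h0 h1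
  have hn_eq : ∑ _k ∈ range n, (1 : ℝ) = n := by simp
  rw [← hn_eq, sum_eq_sum_iff_of_le hle] at h
  simpa using h 1 (mem_range.mpr hn)

theorem Complex.geom_sum_mul_conj_self_eq_natCast_iff {n : ℕ} (hn : 2 ≤ n) {a : ℂ} (ha : ‖a‖ ≤ 1) :
    ∑ k ∈ range n, (a * conj a) ^ k = n ↔ ‖a‖ = 1 := by
  simp_rw [mul_conj', ← ofReal_pow]
  rw [← ofReal_natCast, ← ofReal_sum, ofReal_inj,
    Real.geom_sum_eq_natCast_iff hn (by positivity) (pow_le_one₀ (norm_nonneg a) ha),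
    pow_eq_one_iff_of_nonneg (norm_nonneg a) two_ne_zero]

theorem Complex.geom_sum_mul_conj_eq_zero_iff {n : ℕ} (hn : n ≠ 0) {a b : ℂ}
    (hb : ‖b‖ = 1) : ∑ k ∈ range n, (a * conj b) ^ k = 0 ↔ a ^ n = b ^ n ∧ a ≠ b := by
  have hb0 : b ≠ 0 := norm_ne_zero_iff.mp (hb ▸ one_ne_zero)
  have hconj : conj b = b⁻¹ := by
    rw [inv_def, normSq_eq_norm_sq, hb]
    simp
  rw [geom_sum_eq_zero_iff_pow_eq_one hn, hconj, ← div_eq_mul_inv, div_pow,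
    div_eq_one_iff_eq (pow_ne_zero _ hb0), ne_eq, div_eq_one_iff_eq hb0]

section Gram

variable {n : ℕ} {ζ : Fin n → ℂ}

theorem re_trace_vandermonde_mul_conjTranspose_le (hζ : ∀ i, ‖ζ i‖ ≤ 1) :
    (vandermonde ζ * (vandermonde ζ)ᴴ).trace.re ≤ n * n := by
  have hdiag : ∀ j, ((vandermonde ζ * (vandermonde ζ)ᴴ) j j).re ≤ n := fun j ↦ by
    rw [vandermonde_mul_conjTranspose_apply, Complex.re_sum]
    simp_rw [Complex.mul_conj', ← Complex.ofReal_pow, Complex.ofReal_re]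
    calc ∑ k ∈ range n, (‖ζ j‖ ^ 2) ^ k ≤ ∑ _k ∈ range n, (1 : ℝ) :=
          sum_le_sum fun k _ ↦ pow_le_one₀ (by positivity) (pow_le_one₀ (norm_nonneg _) (hζ j))
      _ = n := by simp
  calc (vandermonde ζ * (vandermonde ζ)ᴴ).trace.re
      = ∑ j, ((vandermonde ζ * (vandermonde ζ)ᴴ) j j).re := by simp [trace, Complex.re_sum]
    _ ≤ ∑ _j : Fin n, (n : ℝ) := sum_le_sum fun j _ ↦ hdiag j
    _ = n * n := by simp

theorem vandermonde_mul_conjTranspose_eq_smul_one_iff (hn : 2 ≤ n) (hζ : ∀ i, ‖ζ i‖ ≤ 1) :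
    vandermonde ζ * (vandermonde ζ)ᴴ = (n : ℂ) • 1 ↔
      (∀ j, ‖ζ j‖ = 1) ∧ Function.Injective ζ ∧ ∀ j l, ζ j ^ n = ζ l ^ n := by
  simp_rw [← Matrix.ext_iff, Matrix.smul_apply, one_apply, smul_eq_mul, mul_ite, mul_one, mul_zero,
    vandermonde_mul_conjTranspose_apply]
  constructor
  · intro h
    have hunit : ∀ j, ‖ζ j‖ = 1 := fun j ↦
      (Complex.geom_sum_mul_conj_self_eq_natCast_iff hn (hζ j)).mp (by simpa using h j j)
    have hoff : ∀ j l, j ≠ l → ζ j ^ n = ζ l ^ n ∧ ζ j ≠ ζ l := fun j l hjl ↦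
      (Complex.geom_sum_mul_conj_eq_zero_iff (by omega) (hunit l)).mp (by simpa [hjl] using h j l)
    refine ⟨hunit, fun j l hjl ↦ ?_, fun j l ↦ ?_⟩
    · by_contra hne
      exact (hoff j l hne).2 hjl
    · rcases eq_or_ne j l with rfl | hjl
      · rfl
      · exact (hoff j l hjl).1
  · rintro ⟨hunit, hinj, hpow⟩ j l
    split_ifs with hjl
    · subst hjl
      exact (Complex.geom_sum_mul_conj_self_eq_natCast_iff hn (hζ j)).mpr (hunit j)
    · exact (Complex.geom_sum_mul_conj_eq_zero_iff (by omega) (hunit l)).mpr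
        ⟨hpow j l, hinj.ne hjl⟩

theorem norm_det_vandermonde_sq_le (hζ : ∀ i, ‖ζ i‖ ≤ 1) :
    ‖(vandermonde ζ).det‖ ^ 2 ≤ n ^ n := by
  have := (posSemidef_self_mul_conjTranspose (vandermonde ζ)).re_det_le_pow (c := n)
    (by simpa using re_trace_vandermonde_mul_conjTranspose_le hζ)
  rwa [Fintype.card_fin, RCLike.re_to_complex, re_det_vandermonde_mul_conjTranspose] at this

theorem norm_det_vandermonde_sq_eq_iff (hn : 2 ≤ n) (hζ : ∀ i, ‖ζ i‖ ≤ 1) :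
    ‖(vandermonde ζ).det‖ ^ 2 = n ^ n ↔
      (∀ j, ‖ζ j‖ = 1) ∧ Function.Injective ζ ∧ ∀ j l, ζ j ^ n = ζ l ^ n := by
  rw [← vandermonde_mul_conjTranspose_eq_smul_one_iff hn hζ, ← re_det_vandermonde_mul_conjTranspose]
  have := (posSemidef_self_mul_conjTranspose (vandermonde ζ)).re_det_eq_pow_iff (c := n)
    (by simpa using re_trace_vandermonde_mul_conjTranspose_le hζ)
  simpa using this

end Gram

namespace Complex

theorem exp_two_pi_I_mul_div_eq_pow (n j : ℕ) :
    exp (2 * Real.pi * I * j / n) = exp (2 * Real.pi * I / n) ^ j := by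
  rw [← exp_nat_mul]
  ring_nf

theorem exists_perm_eq_mul_exp_iff {n : ℕ} [NeZero n] (ζ : Fin n → ℂ) :
    (∃ (u : ℂ) (σ : Equiv.Perm (Fin n)), ‖u‖ = 1 ∧
        ∀ j : Fin n, ζ (σ j) = u * exp (2 * Real.pi * I * j / n)) ↔
      (∀ j, ‖ζ j‖ = 1) ∧ Function.Injective ζ ∧ ∀ j l, ζ j ^ n = ζ l ^ n := by
  have hη := isPrimitiveRoot_exp n (NeZero.ne n)
  simp_rw [exp_two_pi_I_mul_div_eq_pow]
  set η := exp (2 * Real.pi * I / n)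
  constructor
  · rintro ⟨u, σ, hu, hσ⟩
    have hζ : ζ = fun l ↦ u * η ^ (σ.symm l : ℕ) := funext fun l ↦ by
      rw [← hσ, σ.apply_symm_apply]
    have hu0 : u ≠ 0 := norm_ne_zero_iff.mp (hu ▸ one_ne_zero)
    subst hζ
    refine ⟨fun j ↦ ?_, fun j l h ↦ ?_, fun j l ↦ ?_⟩
    · simp [hu, hη.norm'_eq_one (NeZero.ne n)]
    · have := hη.pow_inj (σ.symm j).isLt (σ.symm l).isLt (mul_left_cancel₀ hu0 h)
      exact σ.symm.injective (Fin.ext this)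
    · simp only [mul_pow, ← pow_mul, pow_mul', hη.pow_eq_one, one_pow]
  · rintro ⟨hunit, hinj, hpow⟩
    have hu0 : ζ 0 ≠ 0 := norm_ne_zero_iff.mp (hunit 0 ▸ one_ne_zero)
    have hroot : ∀ j, ∃ k : Fin n, η ^ (k : ℕ) = ζ j / ζ 0 := fun j ↦ by
      obtain ⟨k, hk, hηk⟩ := hη.eq_pow_of_pow_eq_one (ξ := ζ j / ζ 0)
        (by rw [div_pow, hpow j 0, div_self (pow_ne_zero _ hu0)])
      exact ⟨⟨k, hk⟩, hηk⟩
    choose g hg using hroot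
    have hg_inj : Function.Injective g := fun j l h ↦
      hinj <| (div_left_inj' hu0).mp <| (hg j).symm.trans (h ▸ hg l)
    let σ := Equiv.ofBijective g (Finite.injective_iff_bijective.mp hg_inj)
    refine ⟨ζ 0, σ.symm, hunit 0, fun j ↦ ?_⟩
    have := hg (σ.symm j)
    rw [show g (σ.symm j) = j from σ.apply_symm_apply j] at this
    rw [this, mul_div_cancel₀ _ hu0]

end Complex

section Exponents

variable {n : ℕ} {P : ℝ}

theorem rpow_two_div_eq_sq_rpow (hP : 0 ≤ P) :
    P ^ (2 / ((n : ℝ) * (n - 1))) = (P ^ 2) ^ (1 / ((n : ℝ) * (n - 1))) := by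
  rw [← Real.rpow_natCast_mul hP, Nat.cast_ofNat, mul_one_div]

theorem natCast_rpow_one_div_sub_one (hn : 2 ≤ n) :
    (n : ℝ) ^ (1 / ((n : ℝ) - 1)) = ((n : ℝ) ^ n) ^ (1 / ((n : ℝ) * (n - 1))) := by
  have hn1 : (n : ℝ) - 1 ≠ 0 := by
    have : (2 : ℝ) ≤ n := by exact_mod_cast hn
    linarith
  rw [← Real.rpow_natCast_mul (Nat.cast_nonneg n)]
  field_simp

theorem one_div_mul_sub_one_pos (hn : 2 ≤ n) : 0 < 1 / ((n : ℝ) * (n - 1)) := by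
  have : (2 : ℝ) ≤ n := by exact_mod_cast hn
  exact one_div_pos.mpr (mul_pos (by linarith) (by linarith))

theorem rpow_two_div_le_iff (hn : 2 ≤ n) (hP : 0 ≤ P) :
    P ^ (2 / ((n : ℝ) * (n - 1))) ≤ (n : ℝ) ^ (1 / ((n : ℝ) - 1)) ↔ P ^ 2 ≤ n ^ n := by
  rw [rpow_two_div_eq_sq_rpow hP, natCast_rpow_one_div_sub_one hn,
    Real.rpow_le_rpow_iff (by positivity) (by positivity) (one_div_mul_sub_one_pos hn)]

theorem rpow_two_div_eq_iff (hn : 2 ≤ n) (hP : 0 ≤ P) :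
    P ^ (2 / ((n : ℝ) * (n - 1))) = (n : ℝ) ^ (1 / ((n : ℝ) - 1)) ↔ P ^ 2 = n ^ n := by
  rw [rpow_two_div_eq_sq_rpow hP, natCast_rpow_one_div_sub_one hn,
    Real.rpow_left_inj (by positivity) (by positivity) (one_div_mul_sub_one_pos hn).ne']

end Exponents

/-- The `n`-diameter of the closed unit disk is `n^{1/(n-1)}`, and it is
attained exactly at (rotations of) the `n`-th roots of unity. -/
theorem nDiam_closedBall (n : ℕ) (hn : 2 ≤ n) :
    nDiam n (closedBall (0 : ℂ) 1) = (n : ℝ) ^ (1 / ((n : ℝ) - 1)) ∧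
    ∀ ζ : Fin n → ℂ, (∀ i, ζ i ∈ closedBall (0 : ℂ) 1) →
      ((∏ p ∈ Finset.univ.filter (fun p : Fin n × Fin n => p.1 < p.2),
          ‖ζ p.1 - ζ p.2‖) ^ (2 / ((n : ℝ) * ((n : ℝ) - 1))) =
        (n : ℝ) ^ (1 / ((n : ℝ) - 1)) ↔
      ∃ (u : ℂ) (σ : Equiv.Perm (Fin n)), ‖u‖ = 1 ∧
        ∀ j : Fin n, ζ (σ j) = u * Complex.exp (2 * Real.pi * Complex.I * j / n)) := by
  have : NeZero n := ⟨by omega⟩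
  have hdisk : ∀ ζ : Fin n → ℂ, (∀ i, ζ i ∈ closedBall (0 : ℂ) 1) → ∀ i, ‖ζ i‖ ≤ 1 :=
    fun ζ hζ i ↦ mem_closedBall_zero_iff.mp (hζ i)
  set ρ : Fin n → ℂ := fun j ↦ Complex.exp (2 * Real.pi * Complex.I * j / n)
  have hρ := (Complex.exists_perm_eq_mul_exp_iff ρ).mp ⟨1, 1, by simp, fun j ↦ by simp [ρ]⟩
  have hρ_disk : ∀ i, ρ i ∈ closedBall (0 : ℂ) 1 := fun i ↦ by simp [hρ.1 i]
  refine ⟨IsGreatest.csSup_eq ⟨⟨ρ, hρ_disk, ?_⟩, ?_⟩, fun ζ hζ ↦ ?_⟩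
  · rw [eq_comm, prod_norm_sub_eq_norm_det_vandermonde, rpow_two_div_eq_iff hn (norm_nonneg _),
      norm_det_vandermonde_sq_eq_iff hn (hdisk ρ hρ_disk)]
    exact hρ
  · rintro _ ⟨ζ, hζ, rfl⟩
    rw [prod_norm_sub_eq_norm_det_vandermonde, rpow_two_div_le_iff hn (norm_nonneg _)]
    exact norm_det_vandermonde_sq_le (hdisk ζ hζ)
  · rw [prod_norm_sub_eq_norm_det_vandermonde, rpow_two_div_eq_iff hn (norm_nonneg _),
      norm_det_vandermonde_sq_eq_iff hn (hdisk ζ hζ), Complex.exists_perm_eq_mul_exp_iff]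
end

section
/- Let α = exp(2πi/n) and 1 ≤ j ≤ n. Then ∑_{k=1}^{n-1} (1 - α^{jk})/(1 - α^k) = n - j. -/
/-!
Each summand is the geometric sum `∑_{m<j} α^{mk}`. Swapping the two sums, the complete sums
`∑_{k<n} α^{mk}` vanish for `0 < m < n` and equal `n` for `m = 0`; the missing `k = 0` terms
contribute `j`, whence `n - j`.
-/

open Finset

namespace IsPrimitiveRoot

section Domain

variable {R : Type*} [CommRing R] [IsDomain R] {ζ : R} {n : ℕ}

theorem geom_sum_pow_eq_ite (hζ : IsPrimitiveRoot ζ n) (m : ℕ) :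
    ∑ k ∈ range n, (ζ ^ m) ^ k = if n ∣ m then (n : R) else 0 := by
  split_ifs with hm
  · obtain ⟨c, rfl⟩ := hm
    simp [pow_mul, hζ.pow_eq_one]
  · have hne : ζ ^ m ≠ 1 := fun h => hm ((hζ.pow_eq_one_iff_dvd m).mp h)
    refine mul_left_cancel₀ (sub_ne_zero.mpr hne.symm) ?_
    rw [mul_neg_geom_sum, pow_right_comm, hζ.pow_eq_one, one_pow, sub_self, mul_zero]

theorem sum_range_geom_sum_pow (hζ : IsPrimitiveRoot ζ n) {j : ℕ} (hj : 1 ≤ j) (hjn : j ≤ n) :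
    ∑ m ∈ range j, ∑ k ∈ range n, (ζ ^ m) ^ k = n := by
  simp_rw [hζ.geom_sum_pow_eq_ite]
  rw [sum_eq_single_of_mem 0 (mem_range.mpr hj) fun m hm hm0 => ?_]
  · simp
  · have hmn : m < n := (mem_range.mp hm).trans_le hjn
    rw [if_neg (Nat.not_dvd_of_pos_of_lt (Nat.pos_of_ne_zero hm0) hmn)]

end Domain

theorem sum_Ico_one_sub_pow_mul_div_one_sub {K : Type*} [Field K] {ζ : K} {n j : ℕ}
    (hζ : IsPrimitiveRoot ζ n) (hj : 1 ≤ j) (hjn : j ≤ n) :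
    ∑ k ∈ Ico 1 n, (1 - ζ ^ (j * k)) / (1 - ζ ^ k) = n - j := by
  have hratio : ∀ k ∈ Ico 1 n,
      (1 - ζ ^ (j * k)) / (1 - ζ ^ k) = ∑ m ∈ range j, (ζ ^ m) ^ k := by
    intro k hk
    obtain ⟨hk1, hkn⟩ := mem_Ico.mp hk
    have hne : ζ ^ k ≠ 1 := hζ.pow_ne_one_of_pos_of_lt (by omega) hkn
    simp_rw [← pow_mul, mul_comm _ k, pow_mul, range_eq_Ico, geom_sum_Ico' hne (Nat.zero_le j),
      pow_zero]
  calc ∑ k ∈ Ico 1 n, (1 - ζ ^ (j * k)) / (1 - ζ ^ k)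
      = ∑ k ∈ Ico 1 n, ∑ m ∈ range j, (ζ ^ m) ^ k := sum_congr rfl hratio
    _ = ∑ k ∈ range n, ∑ m ∈ range j, (ζ ^ m) ^ k - j := by
      rw [sum_range_eq_add_Ico _ (by omega)]
      simp
    _ = n - j := by rw [sum_comm, hζ.sum_range_geom_sum_pow hj hjn]

end IsPrimitiveRoot

/-- For `α = exp(2πi/n)` and `1 ≤ j ≤ n`,
`∑_{k=1}^{n-1} (1 - α^{jk})/(1 - α^k) = n - j`. -/
theorem sum_root_of_unity_ratio (n j : ℕ) (hj : 1 ≤ j) (hjn : j ≤ n) :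
    ∑ k ∈ Finset.Ico 1 n,
        (1 - Complex.exp (2 * Real.pi * Complex.I / n) ^ (j * k)) /
          (1 - Complex.exp (2 * Real.pi * Complex.I / n) ^ k) =
      (n : ℂ) - (j : ℂ) :=
  (Complex.isPrimitiveRoot_exp n (by omega)).sum_Ico_one_sub_pow_mul_div_one_sub hj hjn
end

section
/- Let α = exp(2πi/n), let A = ∑_{k=1}^{n-1} 1/(1 - α^k), and let 1 ≤ p ≤ n. Then ∑_{k=1}^{n-1} (1 - α^{kp})/(1 - α^k)² = pA - (n - p/2)(p - 1). -/
/-!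
For `x = α^k ≠ 1`, `(1 - x^p)/(1 - x)^2 = p/(1 - x) - ∑_{j<p} ∑_{i<j} x^i`. Summing over
`k = 1, …, n-1` and exchanging the sums turns the double sum into the character sums
`∑_{k=1}^{n-1} α^{ki}`, which are `n - 1` for `i = 0` and `-1` for `0 < i < n`; as `p ≤ n`,
only such `i` occur, and the double sum adds up to `(p - 1) n - C(p, 2)`.
-/

open Finset

theorem one_sub_pow_div_one_sub_sq {K : Type*} [Field K] {x : K} (hx : x ≠ 1) (p : ℕ) :
    (1 - x ^ p) / (1 - x) ^ 2 = p / (1 - x) - ∑ j ∈ range p, ∑ i ∈ range j, x ^ i := by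
  have hx' : 1 - x ≠ 0 := sub_ne_zero.mpr hx.symm
  induction p with
  | zero => simp
  | succ p ih =>
    rw [sum_range_succ, geom_sum_eq hx, Nat.cast_succ, ← sub_sub, add_div, add_sub_right_comm,
      ← ih]
    field_simp
    ring

theorem IsPrimitiveRoot.geom_sum_pow_eq_zero {R : Type*} [CommRing R] [IsDomain R] {ζ : R}
    {n i : ℕ} (hζ : IsPrimitiveRoot ζ n) (hi : ¬ n ∣ i) : ∑ k ∈ range n, (ζ ^ i) ^ k = 0 := by
  refine eq_zero_of_ne_zero_of_mul_left_eq_zero (sub_ne_zero_of_ne (a := 1) (b := ζ ^ i) ?_) ?_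
  · exact fun h => hi (hζ.pow_eq_one_iff_dvd i |>.mp h.symm)
  · rw [mul_neg_geom_sum, pow_right_comm, hζ.pow_eq_one, one_pow, sub_self]

theorem IsPrimitiveRoot.sum_Ico_pow_pow {R : Type*} [CommRing R] [IsDomain R] {ζ : R}
    {n i : ℕ} (hζ : IsPrimitiveRoot ζ n) (hi : i < n) :
    ∑ k ∈ Ico 1 n, (ζ ^ k) ^ i = (if i = 0 then (n : R) else 0) - 1 := by
  have hn : 0 < n := by omega
  rcases Nat.eq_zero_or_pos i with rfl | hi0
  · simp [Nat.cast_pred hn]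
  · have h := hζ.geom_sum_pow_eq_zero (Nat.not_dvd_of_pos_of_lt hi0 hi)
    simp_rw [← pow_mul, mul_comm i, pow_mul] at h
    rw [sum_range_eq_add_Ico _ hn] at h
    simp only [pow_zero, one_pow] at h
    rw [if_neg hi0.ne']
    linear_combination h

theorem sum_range_succ_sum_range_ite_sub_one {R : Type*} [CommRing R] (n p : ℕ) :
    ∑ j ∈ range (p + 1), ∑ i ∈ range j, ((if i = 0 then (n : R) else 0) - 1)
      = p * n - (p + 1).choose 2 := by
  induction p with
  | zero => simp
  | succ p ih =>
    rw [sum_range_succ, ih, sum_sub_distrib, sum_ite_eq' (range (p + 1)),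
      Nat.choose_succ_succ (p + 1) 1, Nat.choose_one_right]
    simp only [mem_range, Nat.zero_lt_succ, if_true, sum_const, card_range, nsmul_eq_mul]
    push_cast
    ring

/-- For `α = exp(2πi/n)`, `A = ∑_{k=1}^{n-1} 1/(1-α^k)` and `1 ≤ p ≤ n`,
`∑_{k=1}^{n-1} (1 - α^{kp})/(1 - α^k)² = pA - (n - p/2)(p - 1)`. -/
theorem sum_root_of_unity_sq (n p : ℕ) (hp : 1 ≤ p) (hpn : p ≤ n)
    (A : ℂ)
    (hA : A = ∑ k ∈ Finset.Ico 1 n,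
      1 / (1 - Complex.exp (2 * Real.pi * Complex.I / n) ^ k)) :
    ∑ k ∈ Finset.Ico 1 n,
        (1 - Complex.exp (2 * Real.pi * Complex.I / n) ^ (k * p)) /
          (1 - Complex.exp (2 * Real.pi * Complex.I / n) ^ k) ^ 2 =
      (p : ℂ) * A - ((n : ℂ) - (p : ℂ) / 2) * ((p : ℂ) - 1) := by
  obtain ⟨q, rfl⟩ := Nat.exists_eq_add_of_le' hp
  set ζ := Complex.exp (2 * Real.pi * Complex.I / n)
  have hζ : IsPrimitiveRoot ζ n := Complex.isPrimitiveRoot_exp n (by omega)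
  have hterm : ∀ k ∈ Ico 1 n, (1 - ζ ^ (k * (q + 1))) / (1 - ζ ^ k) ^ 2 =
      (q + 1 : ℕ) * (1 / (1 - ζ ^ k)) - ∑ j ∈ range (q + 1), ∑ i ∈ range j, (ζ ^ k) ^ i := by
    intro k hk
    rw [mem_Ico] at hk
    rw [pow_mul, one_sub_pow_div_one_sub_sq (hζ.pow_ne_one_of_pos_of_lt (by omega) hk.2),
      mul_one_div]
  have hchar : ∀ j ∈ range (q + 1), ∑ i ∈ range j, ∑ k ∈ Ico 1 n, (ζ ^ k) ^ i =
      ∑ i ∈ range j, ((if i = 0 then (n : ℂ) else 0) - 1) := by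
    intro j hj
    refine sum_congr rfl fun i hi => hζ.sum_Ico_pow_pow ?_
    rw [mem_range] at hi hj
    omega
  calc _ = (q + 1 : ℕ) * A - ∑ j ∈ range (q + 1), ∑ i ∈ range j, ∑ k ∈ Ico 1 n, (ζ ^ k) ^ i := by
        rw [sum_congr rfl hterm, sum_sub_distrib, ← mul_sum, hA, sum_comm]
        simp_rw [sum_comm (s := Ico 1 n)]
    _ = (q + 1 : ℕ) * A - (q * n - (q + 1).choose 2) := by
        rw [sum_congr rfl hchar, sum_range_succ_sum_range_ite_sub_one]
    _ = _ := by
        rw [Nat.cast_choose_two]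
        push_cast
        ring
end

section
/- Let F be a one-to-one analytic map of the unit disk D onto a simply connected domain Ω, and let G be an analytic square root of F' with power series G(z) = ∑ b_n z^n. Then for 0 < r < 1, r^{-1} · Length(∂F(rD)) = 2π ∑_{n=0}^∞ |b_n|² r^{2n}; consequently r ↦ r^{-1} Length(∂F(rD)) is strictly increasing unless F is linear. -/
/-!
On the circle `|z| = r` we have `|F'| = |G|²`, and `G (r e^{iθ}) = ∑ bₙ rⁿ e^{inθ}` is an absolutely
convergent trigonometric series, so integrating `|G|²` term by term against the orthogonal system
`e^{inθ}` on `[0, 2π]` (Parseval) gives the formula. Absolute convergence on every circle of radius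
`< 1` is forced by univalence: otherwise the power series diverges on an annulus, where `G` is then
the junk value `0` of `tsum`, so `G ≡ 0` by the identity theorem and `F` would be constant.
If `F` is not affine, some `bₙ` with `n ≥ 1` is nonzero, and that term makes the sum strictly
increasing in `r`.
-/

open Metric Set intervalIntegral Filter Complex MeasureTheory ComplexConjugate Topology

theorem intervalIntegral.hasSum_integral_of_norm_le {ι E : Type*} [Countable ι]
    [NormedAddCommGroup E] [NormedSpace ℝ E] [CompleteSpace E] {f : ι → ℝ → E} {M : ι → ℝ}
    (hf : ∀ i, Continuous (f i)) (hM : Summable M) (hfM : ∀ i x, ‖f i x‖ ≤ M i) (a b : ℝ) :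
    HasSum (fun i => ∫ x in a..b, f i x) (∫ x in a..b, ∑' i, f i x) :=
  hasSum_integral_of_dominated_convergence (fun i _ => M i)
    (fun i => (hf i).aestronglyMeasurable) (fun i => ae_of_all _ fun x _ => hfM i x)
    (ae_of_all _ fun _ _ => hM) intervalIntegrable_const
    (ae_of_all _ fun x _ => (hM.of_norm_bounded fun i => hfM i x).hasSum)

theorem exp_mul_I_pow_mul_conj_pow (θ : ℝ) (m n : ℕ) :
    exp (θ * I) ^ m * conj (exp (θ * I) ^ n) = exp (((m : ℂ) - n) * I * θ) := by
  rw [map_pow, ← exp_conj, ← exp_nat_mul, ← exp_nat_mul, ← exp_add]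
  congr 1
  simp only [map_mul, conj_ofReal, conj_I]
  ring

theorem integral_exp_mul_I_pow_mul_conj_pow (m n : ℕ) :
    ∫ θ in (0 : ℝ)..2 * Real.pi, exp (θ * I) ^ m * conj (exp (θ * I) ^ n) =
      if m = n then (2 * Real.pi : ℂ) else 0 := by
  simp only [exp_mul_I_pow_mul_conj_pow]
  split_ifs with hmn
  · simp [hmn]
  · have hk : ((m : ℂ) - n) * I ≠ 0 :=
      mul_ne_zero (sub_ne_zero.mpr (by exact_mod_cast hmn)) I_ne_zero
    rw [integral_exp_mul_complex hk]
    have : ((m : ℂ) - n) * I * ((2 * Real.pi : ℝ) : ℂ) =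
        ((m : ℤ) - n : ℤ) * (2 * Real.pi * I) := by push_cast; ring
    rw [this, exp_int_mul_two_pi_mul_I]
    simp

theorem integral_tsum_mul_exp_mul_I_pow_mul_conj_pow {c : ℕ → ℂ}
    (hc : Summable fun m => ‖c m‖) (n : ℕ) :
    ∫ θ in (0 : ℝ)..2 * Real.pi, (∑' m, c m * exp (θ * I) ^ m) * conj (exp (θ * I) ^ n) =
      2 * Real.pi * c n := by
  have hcont : ∀ m, Continuous fun θ : ℝ => c m * (exp (θ * I) ^ m * conj (exp (θ * I) ^ n)) := by
    intro m; fun_prop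
  have hbound : ∀ m (θ : ℝ), ‖c m * (exp (θ * I) ^ m * conj (exp (θ * I) ^ n))‖ ≤ ‖c m‖ := by
    intro m θ; simp
  have hswap := intervalIntegral.hasSum_integral_of_norm_le hcont hc hbound 0 (2 * Real.pi)
  simp only [intervalIntegral.integral_const_mul, integral_exp_mul_I_pow_mul_conj_pow] at hswap
  simp_rw [← tsum_mul_right, mul_assoc]
  rw [hswap.unique (hasSum_single n fun m hm => by simp [hm]), if_pos rfl]
  ring

theorem hasSum_integral_norm_tsum_mul_exp_mul_I_pow_sq {c : ℕ → ℂ}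
    (hc : Summable fun m => ‖c m‖) :
    HasSum (fun m => 2 * Real.pi * ‖c m‖ ^ 2)
      (∫ θ in (0 : ℝ)..2 * Real.pi, ‖∑' m, c m * exp (θ * I) ^ m‖ ^ 2) := by
  set u : ℝ → ℂ := fun θ => ∑' m, c m * exp (θ * I) ^ m
  have hu : Continuous u := continuous_tsum (fun m => by fun_prop) hc fun m θ => by simp
  have hu_le : ∀ θ, ‖u θ‖ ≤ ∑' m, ‖c m‖ := fun θ =>
    (norm_tsum_le_tsum_norm (by simpa using hc)).trans_eq (by simp)
  have hcont : ∀ n, Continuous fun θ : ℝ => conj (c n) * (u θ * conj (exp (θ * I) ^ n)) := by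
    intro n; fun_prop
  have hbound : ∀ n θ, ‖conj (c n) * (u θ * conj (exp (θ * I) ^ n))‖ ≤ ‖c n‖ * ∑' m, ‖c m‖ := by
    intro n θ
    simpa using mul_le_mul_of_nonneg_left (hu_le θ) (norm_nonneg (c n))
  have hswap := intervalIntegral.hasSum_integral_of_norm_le hcont (hc.mul_right _) hbound
    0 (2 * Real.pi)
  have hcoeff : ∀ n, ∫ θ in (0 : ℝ)..2 * Real.pi, u θ * conj (exp (θ * I) ^ n) =
      2 * Real.pi * c n :=
    integral_tsum_mul_exp_mul_I_pow_mul_conj_pow hc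
  have hterm : ∀ n, conj (c n) * (2 * Real.pi * c n) = ((2 * Real.pi * ‖c n‖ ^ 2 : ℝ) : ℂ) := by
    intro n
    push_cast
    rw [← mul_conj']
    ring
  have hsum : ∀ θ, ∑' n, conj (c n) * (u θ * conj (exp (θ * I) ^ n)) = ((‖u θ‖ ^ 2 : ℝ) : ℂ) := by
    intro θ
    push_cast
    rw [← mul_conj', conj_tsum, ← tsum_mul_left]
    congr 1
    ext m
    rw [map_mul]
    ring
  simpa only [intervalIntegral.integral_const_mul, hcoeff, hterm, hsum,
    intervalIntegral.integral_ofReal, Complex.hasSum_ofReal] using hswap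

theorem hasSum_integral_norm_tsum_mul_pow_sq {b : ℕ → ℂ} {r : ℝ} (hr : 0 ≤ r)
    (hb : Summable fun m => ‖b m‖ * r ^ m) :
    HasSum (fun m => 2 * Real.pi * ‖b m‖ ^ 2 * r ^ (2 * m))
      (∫ θ in (0 : ℝ)..2 * Real.pi, ‖∑' m, b m * (r * exp (θ * I)) ^ m‖ ^ 2) := by
  have hnorm : ∀ m, ‖b m * (r : ℂ) ^ m‖ = ‖b m‖ * r ^ m := fun m => by
    rw [norm_mul, norm_pow, norm_real, Real.norm_of_nonneg hr]
  have := hasSum_integral_norm_tsum_mul_exp_mul_I_pow_sq (c := fun m => b m * (r : ℂ) ^ m)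
    (by simpa only [hnorm] using hb)
  have hnorm_sq : ∀ m, ‖b m * (r : ℂ) ^ m‖ ^ 2 = ‖b m‖ ^ 2 * r ^ (2 * m) := fun m => by
    rw [hnorm, mul_pow, pow_mul']
  simpa only [hnorm_sq, mul_pow, mul_assoc] using this

theorem hasSum_inv_mul_integral_norm_deriv_circle {F G : ℂ → ℂ} {b : ℕ → ℂ} {R r : ℝ}
    (hsq : ∀ z ∈ ball 0 R, G z ^ 2 = deriv F z) (hb : ∀ z ∈ ball 0 R, G z = ∑' m, b m * z ^ m)
    (hr₀ : 0 < r) (hrR : r < R) (hsum : Summable fun m => ‖b m‖ * r ^ m) :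
    HasSum (fun m => 2 * Real.pi * ‖b m‖ ^ 2 * r ^ (2 * m))
      (r⁻¹ * ∫ θ in (0 : ℝ)..2 * Real.pi, ‖deriv F (r * exp (θ * I))‖ * r) := by
  have hderiv : ∀ θ : ℝ,
      ‖deriv F (r * exp (θ * I))‖ = ‖∑' m, b m * (r * exp (θ * I)) ^ m‖ ^ 2 := by
    intro θ
    have hz : (r : ℂ) * exp (θ * I) ∈ ball 0 R := by
      simpa [norm_exp_ofReal_mul_I, abs_of_pos hr₀] using hrR
    rw [← hsq _ hz, norm_pow, hb _ hz]
  rw [intervalIntegral.integral_mul_const, inv_mul_eq_div, mul_div_cancel_right₀ _ hr₀.ne']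
  simpa only [hderiv] using hasSum_integral_norm_tsum_mul_pow_sq hr₀.le hsum

theorem summable_norm_mul_pow_of_summable_mul_pow {b : ℕ → ℂ} {w : ℂ}
    (hs : Summable fun m => b m * w ^ m) {t : ℝ} (ht₀ : 0 ≤ t) (ht : t < ‖w‖) :
    Summable fun m => ‖b m‖ * t ^ m := by
  set p := FormalMultilinearSeries.ofScalars ℂ b
  have hw : (‖w‖₊ : ENNReal) ≤ p.radius := p.le_radius_of_tendsto (l := 0) <| by
    simpa [p, FormalMultilinearSeries.ofScalars_norm] using hs.tendsto_atTop_zero.norm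
  lift t to NNReal using ht₀
  have ht' : (t : ENNReal) < p.radius := lt_of_lt_of_le (by exact_mod_cast ht) hw
  simpa only [p, FormalMultilinearSeries.ofScalars_norm] using p.summable_norm_mul_pow ht'

theorem summable_norm_mul_pow_of_eqOn_tsum {G : ℂ → ℂ} {b : ℕ → ℂ} {R : ℝ}
    (hG : DifferentiableOn ℂ G (ball 0 R)) (hb : ∀ z ∈ ball 0 R, G z = ∑' m, b m * z ^ m)
    (hG₀ : ∃ z ∈ ball 0 R, G z ≠ 0) {t : ℝ} (ht₀ : 0 ≤ t) (ht : t < R) :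
    Summable fun m => ‖b m‖ * t ^ m := by
  by_contra hnot
  obtain ⟨z, hz, hGz⟩ := hG₀
  have hannulus : EqOn G 0 ({w | t < ‖w‖} ∩ ball 0 R) := fun w ⟨htw, hw⟩ => by
    rw [hb w hw, tsum_eq_zero_of_not_summable fun hs =>
      hnot (summable_norm_mul_pow_of_summable_mul_pow hs ht₀ htw), Pi.zero_apply]
  set w₀ : ℂ := (((t + R) / 2 : ℝ) : ℂ)
  have hw₀ : w₀ ∈ {w | t < ‖w‖} ∩ ball 0 R := by
    have : ‖w₀‖ = (t + R) / 2 := by rw [norm_real, Real.norm_of_nonneg (by linarith)]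
    exact ⟨show t < ‖w₀‖ by linarith, mem_ball_zero_iff.mpr (by linarith)⟩
  have hopen : IsOpen ({w : ℂ | t < ‖w‖} ∩ ball 0 R) :=
    (isOpen_lt continuous_const continuous_norm).inter isOpen_ball
  exact hGz <| (hG.analyticOnNhd isOpen_ball).eqOn_zero_of_preconnected_of_eventuallyEq_zero
    (convex_ball 0 R).isPreconnected hw₀.2 (eventuallyEq_of_mem (hopen.mem_nhds hw₀) hannulus) hz

theorem IsOpen.exists_deriv_ne_zero_of_injOn {𝕜 E : Type*} [RCLike 𝕜] [NormedAddCommGroup E]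
    [NormedSpace 𝕜 E] {f : 𝕜 → E} {s : Set 𝕜} (hs : IsOpen s)
    (hs' : IsPreconnected s) (hnt : s.Nontrivial) (hf : DifferentiableOn 𝕜 f s)
    (hinj : InjOn f s) : ∃ z ∈ s, deriv f z ≠ 0 := by
  by_contra! h
  obtain ⟨x, hx, y, hy, hxy⟩ := hnt
  exact hxy (hinj hx hy (hs.is_const_of_deriv_eq_zero hs' hf h hx hy))

theorem IsOpen.exists_eq_mul_add_of_deriv_eq_const {𝕜 : Type*} [RCLike 𝕜] {f : 𝕜 → 𝕜}
    {s : Set 𝕜} {a : 𝕜} (hs : IsOpen s) (hs' : IsPreconnected s) (hf : DifferentiableOn 𝕜 f s)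
    (hf' : ∀ z ∈ s, deriv f z = a) : ∃ c, ∀ z ∈ s, f z = a * z + c :=
  hs.exists_eq_add_of_deriv_eq hs' hf (differentiable_id.const_mul a).differentiableOn
    fun z hz => by simp [hf' z hz]

theorem strictMonoOn_of_hasSum_mul_pow {a : ℕ → ℝ} {f : ℝ → ℝ} {s : Set ℝ} (hs : s ⊆ Ici 0)
    {k : ℕ} (hk : k ≠ 0) (ha : ∀ m, 0 ≤ a m) {m₀ : ℕ} (hm₀ : m₀ ≠ 0) (ha₀ : 0 < a m₀)
    (hf : ∀ r ∈ s, HasSum (fun m => a m * r ^ (k * m)) (f r)) : StrictMonoOn f s := by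
  intro r hr t ht hrt
  have hr₀ : 0 ≤ r := hs hr
  rw [← (hf r hr).tsum_eq, ← (hf t ht).tsum_eq]
  exact (hf t ht).summable.tsum_lt_tsum_of_nonneg (i := m₀)
    (fun m => mul_nonneg (ha m) (pow_nonneg hr₀ _))
    (fun m => mul_le_mul_of_nonneg_left (pow_le_pow_left₀ hr₀ hrt.le _) (ha m))
    (mul_lt_mul_of_pos_left (pow_lt_pow_left₀ hrt hr₀ (mul_ne_zero hk hm₀)) ha₀)

theorem perimeter_schwarz_general (F : ℂ → ℂ)
    (hF : DifferentiableOn ℂ F (ball (0 : ℂ) 1))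
    (hinj : Set.InjOn F (ball (0 : ℂ) 1))
    (G : ℂ → ℂ) (hG : DifferentiableOn ℂ G (ball (0 : ℂ) 1))
    (hsq : ∀ z ∈ ball (0 : ℂ) 1, G z ^ 2 = deriv F z)
    (b : ℕ → ℂ) (hb : ∀ z ∈ ball (0 : ℂ) 1, G z = ∑' m : ℕ, b m * z ^ m) :
    (∀ r ∈ Set.Ioo (0 : ℝ) 1,
      r⁻¹ * ∫ θ in (0 : ℝ)..2 * Real.pi,
          ‖deriv F (r * Complex.exp (θ * Complex.I))‖ * r =
        2 * Real.pi * ∑' m : ℕ, ‖b m‖ ^ 2 * r ^ (2 * m)) ∧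
    (¬ (∃ a c : ℂ, ∀ z ∈ ball (0 : ℂ) 1, F z = a * z + c) →
      StrictMonoOn
        (fun r : ℝ => r⁻¹ * ∫ θ in (0 : ℝ)..2 * Real.pi,
          ‖deriv F (r * Complex.exp (θ * Complex.I))‖ * r)
        (Set.Ioo 0 1)) := by
  have hG₀ : ∃ z ∈ ball (0 : ℂ) 1, G z ≠ 0 := by
    obtain ⟨z, hz, hFz⟩ := isOpen_ball.exists_deriv_ne_zero_of_injOn
      (convex_ball 0 1).isPreconnected ⟨0, by simp, 1 / 2, by norm_num, by norm_num⟩ hF hinj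
    exact ⟨z, hz, fun hGz => hFz (by rw [← hsq z hz, hGz, zero_pow two_ne_zero])⟩
  have hperimeter : ∀ r ∈ Ioo (0 : ℝ) 1,
      HasSum (fun m => 2 * Real.pi * ‖b m‖ ^ 2 * r ^ (2 * m))
        (r⁻¹ * ∫ θ in (0 : ℝ)..2 * Real.pi, ‖deriv F (r * exp (θ * I))‖ * r) :=
    fun r hr => hasSum_inv_mul_integral_norm_deriv_circle hsq hb hr.1 hr.2
      (summable_norm_mul_pow_of_eqOn_tsum hG hb hG₀ hr.1.le hr.2)
  refine ⟨fun r hr => ?_, fun hlin => ?_⟩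
  · simp_rw [← (hperimeter r hr).tsum_eq, mul_assoc, tsum_mul_left]
  obtain ⟨m₀, hm₀, hbm₀⟩ : ∃ m ≠ 0, b m ≠ 0 := by
    by_contra! hb₀
    refine hlin ⟨b 0 ^ 2, isOpen_ball.exists_eq_mul_add_of_deriv_eq_const
      (convex_ball 0 1).isPreconnected hF fun z hz => ?_⟩
    rw [← hsq z hz, hb z hz, tsum_eq_single 0 fun m hm => by rw [hb₀ m hm, zero_mul],
      pow_zero, mul_one]
  exact strictMonoOn_of_hasSum_mul_pow (fun r hr => hr.1.le) two_ne_zero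
    (fun m => by positivity) hm₀ (by positivity) hperimeter

/-- If `F` is a one-to-one analytic map of the unit disk onto a simply
connected domain `Ω` and `G = ∑ bₙ zⁿ` is an analytic square root of `F'`,
then `r⁻¹ · Length ∂F(r𝔻) = 2π ∑ |bₙ|² r^{2n}`, where
`Length ∂F(r𝔻) = ∫_{|z|=r} |F'(z)| |dz|`; consequently
`r ↦ r⁻¹ Length ∂F(r𝔻)` is strictly increasing on `(0,1)` unless `F` is
linear. -/
theorem perimeter_schwarz (F : ℂ → ℂ) (Ω : Set ℂ)
    (hF : DifferentiableOn ℂ F (ball (0 : ℂ) 1))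
    (hinj : Set.InjOn F (ball (0 : ℂ) 1))
    (hΩ : F '' ball (0 : ℂ) 1 = Ω)
    (hsc : SimplyConnectedSpace Ω)
    (G : ℂ → ℂ) (hG : DifferentiableOn ℂ G (ball (0 : ℂ) 1))
    (hsq : ∀ z ∈ ball (0 : ℂ) 1, G z ^ 2 = deriv F z)
    (b : ℕ → ℂ) (hb : ∀ z ∈ ball (0 : ℂ) 1, G z = ∑' m : ℕ, b m * z ^ m) :
    (∀ r ∈ Set.Ioo (0 : ℝ) 1,
      r⁻¹ * ∫ θ in (0 : ℝ)..2 * Real.pi,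
          ‖deriv F (r * Complex.exp (θ * Complex.I))‖ * r =
        2 * Real.pi * ∑' m : ℕ, ‖b m‖ ^ 2 * r ^ (2 * m)) ∧
    (¬ (∃ a c : ℂ, ∀ z ∈ ball (0 : ℂ) 1, F z = a * z + c) →
      StrictMonoOn
        (fun r : ℝ => r⁻¹ * ∫ θ in (0 : ℝ)..2 * Real.pi,
          ‖deriv F (r * Complex.exp (θ * Complex.I))‖ * r)
        (Set.Ioo 0 1)) :=
  perimeter_schwarz_general F hF hinj G hG hsq b hb
end
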